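/- arXiv:2305.06280 — 7 statements merged into one kernel-verified Lean document; each statement's English description precedes it below -/
import Mathlib

section
/- Let S ∈ Sⁿ₊ with S ≠ 0, let L ⊆ Sⁿ be a linear subspace such that there is no nonzero Ω ∈ Sⁿ₊ ∩ L with ΩS = 0, and let K ∈ L ∩ Sⁿ₊₊. For a nonzero Ω ∈ L with tr(Ω²) = 1, set λ_Ω = sup{λ > 0 : K + λΩ ∈ Sⁿ₊₊} ∈ (0, ∞]. Then for every such Ω, f(K + λΩ) = tr(S(K + λΩ)) − log det(K + λΩ) tends to +∞ as λ approaches λ_Ω from below (in particular, if Ω is PSD then λ_Ω = ∞ and tr(SΩ) > 0, while if Ω is not PSD then λ_Ω < ∞ and det(K + λΩ) → 0). -/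
/-!
If `Ω` is positive semidefinite, the whole ray `K + lΩ` stays positive definite and
`tr (S Ω) > 0`, since `Ω S ≠ 0`. The bound `log det A ≤ c tr A - n (1 + log c)` (from
`log x ≤ x - 1` on the eigenvalues), with `c > 0` so small that `c tr Ω < tr (S Ω)`, then
gives `f (K + lΩ) ≥ a + b l` with `b = tr (S Ω) - c tr Ω > 0`.

Otherwise some `x` has `xᵀ Ω x < 0`, so the ray leaves the positive definite cone at a finite
`λ_Ω`. There `K + λ_Ω Ω` is positive semidefinite (the cone is closed) but not positive
definite (the positive definite cone is open), hence singular. So `det → 0` and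
`- log det → ∞`, while the trace term stays bounded.
-/
open Matrix Filter Topology

/-- The maximum likelihood objective function `f(K) = tr(SK) - log det K`. -/
noncomputable def mleObj {n : ℕ} (S K : Matrix (Fin n) (Fin n) ℝ) : ℝ :=
  (S * K).trace - Real.log K.det

open scoped MatrixOrder

namespace Matrix

variable {m : Type*}

lemma PosDef.add_smul_of_le {K Ω : Matrix m m ℝ} (hK : K.PosDef) {l l' : ℝ} (hl : 0 < l)
    (hll' : l ≤ l') (h' : (K + l' • Ω).PosDef) : (K + l • Ω).PosDef := by
  have hl' : 0 < l' := hl.trans_le hll'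
  have hconvex : K + l • Ω = (1 - l / l') • K + (l / l') • (K + l' • Ω) := by
    rw [smul_add, smul_smul, div_mul_cancel₀ _ hl'.ne', sub_smul, one_smul]
    abel
  rw [hconvex]
  exact (h'.smul (div_pos hl hl')).posSemidef_add
    (hK.posSemidef.smul (sub_nonneg.2 ((div_le_one hl').2 hll')))

lemma PosDef.add_smul_of_lt_isLUB {K Ω : Matrix m m ℝ} (hK : K.PosDef) {lΩ : ℝ}
    (hlub : IsLUB {l : ℝ | 0 < l ∧ (K + l • Ω).PosDef} lΩ) {l : ℝ} (hl : 0 < l) (hlt : l < lΩ) :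
    (K + l • Ω).PosDef := by
  obtain ⟨l', hl', hll'⟩ := (lt_isLUB_iff hlub).mp hlt
  exact hK.add_smul_of_le hl hll'.le hl'.2

variable [Fintype m]

lemma isClosed_setOf_posSemidef : IsClosed {A : Matrix m m ℝ | A.PosSemidef} := by
  simp only [posSemidef_iff_dotProduct_mulVec, Set.ofPred_and, Set.ofPred_forall]
  refine .inter (isClosed_eq continuous_id.matrix_conjTranspose continuous_id) ?_
  exact isClosed_iInter fun x => isClosed_le continuous_const (by fun_prop)

lemma bddAbove_setOf_posDef_add_smul (K : Matrix m m ℝ) {Ω : Matrix m m ℝ}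
    (hΩ : Ω.IsHermitian) (hΩ' : ¬ Ω.PosSemidef) : BddAbove {l : ℝ | (K + l • Ω).PosDef} := by
  obtain ⟨x, hx⟩ : ∃ x : m → ℝ, x ⬝ᵥ Ω *ᵥ x < 0 := by
    by_contra! h
    exact hΩ' (.of_dotProduct_mulVec_nonneg hΩ fun x => by simpa using h x)
  refine ⟨(x ⬝ᵥ K *ᵥ x) / -(x ⬝ᵥ Ω *ᵥ x), fun l hl => ?_⟩
  have hx0 : x ≠ 0 := by rintro rfl; simp at hx
  have := hl.dotProduct_mulVec_pos hx0
  rw [star_trivial, add_mulVec, dotProduct_add, smul_mulVec, dotProduct_smul, smul_eq_mul] at this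
  rw [le_div_iff₀ (neg_pos.2 hx)]
  linarith

variable [DecidableEq m]

lemma PosSemidef.exists_eq_conjTranspose_mul_self {A : Matrix m m ℝ} (hA : A.PosSemidef) :
    ∃ B : Matrix m m ℝ, A = Bᴴ * B :=
  ⟨CFC.sqrt A, by
    rw [← star_eq_conjTranspose, (CFC.sqrt_nonneg A).isSelfAdjoint.star_eq,
      CFC.sqrt_mul_sqrt_self A hA.nonneg]⟩

/-- Writing `S = Cᴴ C` and `Ω = Bᴴ B`, `tr (S Ω) = ‖B Cᴴ‖²`, which vanishes only if `B Cᴴ = 0`. -/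
lemma PosSemidef.trace_mul_pos {S Ω : Matrix m m ℝ} (hS : S.PosSemidef) (hΩ : Ω.PosSemidef)
    (hΩS : Ω * S ≠ 0) : 0 < (S * Ω).trace := by
  obtain ⟨C, rfl⟩ := hS.exists_eq_conjTranspose_mul_self
  obtain ⟨B, rfl⟩ := hΩ.exists_eq_conjTranspose_mul_self
  have htrace : (Cᴴ * C * (Bᴴ * B)).trace = ((B * Cᴴ)ᴴ * (B * Cᴴ)).trace := by
    simp only [conjTranspose_mul, conjTranspose_conjTranspose, Matrix.mul_assoc]
    rw [trace_mul_comm, Matrix.mul_assoc, Matrix.mul_assoc]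
  rw [htrace]
  refine (posSemidef_conjTranspose_mul_self _).trace_nonneg.lt_of_ne' fun h => hΩS ?_
  rw [trace_conjTranspose_mul_self_eq_zero_iff] at h
  rw [Matrix.mul_assoc, ← Matrix.mul_assoc B, h, Matrix.zero_mul, Matrix.mul_zero]

lemma PosDef.log_det_le {A : Matrix m m ℝ} (hA : A.PosDef) {c : ℝ} (hc : 0 < c) :
    Real.log A.det ≤ c * A.trace - Fintype.card m * (1 + Real.log c) := by
  rw [hA.1.det_eq_prod_eigenvalues, hA.1.trace_eq_sum_eigenvalues]
  simp only [RCLike.ofReal_real_eq_id, id]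
  rw [Real.log_prod fun i _ => (hA.eigenvalues_pos i).ne', Finset.mul_sum, Finset.card_univ.symm,
    ← nsmul_eq_mul, ← Finset.sum_const, ← Finset.sum_sub_distrib]
  refine Finset.sum_le_sum fun i _ => ?_
  have hev := hA.eigenvalues_pos i
  have := Real.log_le_sub_one_of_pos (mul_pos hc hev)
  rw [Real.log_mul hc.ne' hev.ne'] at this
  linarith

lemma PosDef.exists_pos_algebraMap_le [Nonempty m] {A : Matrix m m ℝ} (hA : A.PosDef) :
    ∃ r > 0, algebraMap ℝ (Matrix m m ℝ) r ≤ A := by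
  rw [CFC.exists_pos_algebraMap_le_iff hA.1.isSelfAdjoint, hA.1.spectrum_real_eq_range_eigenvalues]
  rintro _ ⟨i, rfl⟩
  exact hA.eigenvalues_pos i

lemma IsHermitian.exists_algebraMap_le {A : Matrix m m ℝ} (hA : A.IsHermitian) :
    ∃ c, algebraMap ℝ (Matrix m m ℝ) c ≤ A := by
  obtain ⟨c, hc⟩ := (finite_real_spectrum (A := A)).bddBelow
  exact ⟨c, (algebraMap_le_iff_le_spectrum hA.isSelfAdjoint).mpr hc⟩

lemma PosDef.exists_pos_posDef_add_smul [Nonempty m] {A B : Matrix m m ℝ} (hA : A.PosDef)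
    (hB : B.IsHermitian) : ∃ ε : ℝ, 0 < ε ∧ (A + ε • B).PosDef := by
  obtain ⟨r, hr, hrA⟩ := hA.exists_pos_algebraMap_le
  obtain ⟨c, hcB⟩ := hB.exists_algebraMap_le
  obtain ⟨ε, hε, hεc⟩ := exists_pos_mul_lt hr (-c)
  refine ⟨ε, hε, ?_⟩
  have hle : algebraMap ℝ (Matrix m m ℝ) (r + ε * c) ≤ A + ε • B := by
    rw [map_add, map_mul, ← Algebra.smul_def]
    exact add_le_add hrA (smul_le_smul_of_nonneg_left hcB hε.le)
  have hpos : (algebraMap ℝ (Matrix m m ℝ) (r + ε * c)).PosDef := by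
    rw [Algebra.algebraMap_eq_smul_one]
    exact PosDef.one.smul (by linarith)
  simpa using hpos.add_posSemidef (le_iff.mp hle)

lemma PosDef.exists_pos_isLUB_setOf_posDef_add_smul [Nonempty m] {K Ω : Matrix m m ℝ}
    (hK : K.PosDef) (hΩ : Ω.IsHermitian) (hΩ' : ¬ Ω.PosSemidef) :
    ∃ lΩ : ℝ, 0 < lΩ ∧ IsLUB {l : ℝ | 0 < l ∧ (K + l • Ω).PosDef} lΩ := by
  obtain ⟨ε, hε, hεpd⟩ := hK.exists_pos_posDef_add_smul hΩ
  have hlub := isLUB_csSup (s := {l : ℝ | 0 < l ∧ (K + l • Ω).PosDef}) ⟨ε, hε, hεpd⟩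
    ((bddAbove_setOf_posDef_add_smul K hΩ hΩ').mono fun _ hl => hl.2)
  exact ⟨_, hε.trans_le (hlub.1 ⟨hε, hεpd⟩), hlub⟩

lemma det_add_smul_eq_zero_of_isLUB [Nonempty m] {K Ω : Matrix m m ℝ} {lΩ : ℝ} (hΩ : Ω.IsHermitian)
    (hlub : IsLUB {l : ℝ | 0 < l ∧ (K + l • Ω).PosDef} lΩ) (hpos : 0 < lΩ) :
    (K + lΩ • Ω).det = 0 := by
  have hpsd : (K + lΩ • Ω).PosSemidef := by
    have hclosed : IsClosed {l : ℝ | (K + l • Ω).PosSemidef} :=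
      isClosed_setOf_posSemidef.preimage (by fun_prop)
    obtain ⟨l, hl, -⟩ := (lt_isLUB_iff hlub).mp hpos
    exact hclosed.closure_subset_iff.mpr (fun l hl => hl.2.posSemidef) (hlub.mem_closure ⟨l, hl⟩)
  have hnpd : ¬ (K + lΩ • Ω).PosDef := by
    intro hpd
    obtain ⟨ε, hε, hεpd⟩ := hpd.exists_pos_posDef_add_smul hΩ
    have hmem : lΩ + ε ∈ {l : ℝ | 0 < l ∧ (K + l • Ω).PosDef} :=
      ⟨by linarith, by rwa [add_smul, ← add_assoc]⟩
    linarith [hlub.1 hmem]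
  by_contra hdet
  exact hnpd (hpsd.posDef_iff_det_ne_zero.mpr hdet)

end Matrix

lemma tendsto_mleObj_atTop_of_tendsto_det {ι : Type*} {F : Filter ι} {n : ℕ}
    {S : Matrix (Fin n) (Fin n) ℝ} {A : ι → Matrix (Fin n) (Fin n) ℝ} {c : ℝ}
    (htr : Tendsto (fun i => (S * A i).trace) F (𝓝 c))
    (hdet : Tendsto (fun i => (A i).det) F (𝓝[>] 0)) :
    Tendsto (fun i => mleObj S (A i)) F atTop := by
  simpa only [mleObj, sub_eq_add_neg, Function.comp_def] using
    htr.add_atTop (tendsto_neg_atBot_atTop.comp (Real.tendsto_log_nhdsGT_zero.comp hdet))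

lemma tendsto_mleObj_add_smul_atTop {n : ℕ} {S K Ω : Matrix (Fin n) (Fin n) ℝ}
    (hK : K.PosDef) (hΩ : Ω.PosSemidef) (hSΩ : 0 < (S * Ω).trace) :
    Tendsto (fun l : ℝ => mleObj S (K + l • Ω)) atTop atTop := by
  obtain ⟨c, hc, hcΩ⟩ := exists_pos_mul_lt hSΩ Ω.trace
  have hlin : Tendsto (fun l : ℝ => (S * K).trace - c * K.trace + n * (1 + Real.log c) +
      ((S * Ω).trace - Ω.trace * c) * l) atTop atTop :=
    tendsto_atTop_add_const_left _ _ (tendsto_id.const_mul_atTop (by linarith))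
  refine tendsto_atTop_mono' _ ?_ hlin
  filter_upwards [eventually_gt_atTop 0] with l hl
  have hlog := (hK.add_posSemidef (hΩ.smul hl.le)).log_det_le hc
  simp only [mleObj, Matrix.mul_add, trace_add, Matrix.mul_smul, trace_smul, smul_eq_mul,
    Fintype.card_fin] at hlog ⊢
  linarith

theorem stmt1_general (n : ℕ) (S : Matrix (Fin n) (Fin n) ℝ) (hS : S.PosSemidef)
    (L : Submodule ℝ (Matrix (Fin n) (Fin n) ℝ)) (hLsymm : ∀ A ∈ L, A.IsSymm)
    (hno : ¬ ∃ Ω : Matrix (Fin n) (Fin n) ℝ, Ω ∈ L ∧ Ω ≠ 0 ∧ Ω.PosSemidef ∧ Ω * S = 0)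
    (K : Matrix (Fin n) (Fin n) ℝ) (hK : K.PosDef) :
    ∀ Ω ∈ L, Ω ≠ 0 → (Ω * Ω).trace = 1 →
      (Ω.PosSemidef →
        (∀ l : ℝ, 0 < l → (K + l • Ω).PosDef) ∧ 0 < (S * Ω).trace ∧
        Tendsto (fun l : ℝ => mleObj S (K + l • Ω)) atTop atTop) ∧
      (¬ Ω.PosSemidef →
        ∃ lΩ : ℝ, 0 < lΩ ∧ IsLUB {l : ℝ | 0 < l ∧ (K + l • Ω).PosDef} lΩ ∧
          Tendsto (fun l : ℝ => (K + l • Ω).det) (𝓝[<] lΩ) (𝓝 0) ∧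
          Tendsto (fun l : ℝ => mleObj S (K + l • Ω)) (𝓝[<] lΩ) atTop) := by
  intro Ω hΩL hΩ0 _
  refine ⟨fun hΩpsd => ?_, fun hΩpsd => ?_⟩
  · have hSΩ : 0 < (S * Ω).trace :=
      hS.trace_mul_pos hΩpsd fun hΩS => hno ⟨Ω, hΩL, hΩ0, hΩpsd, hΩS⟩
    exact ⟨fun l hl => hK.add_posSemidef (hΩpsd.smul hl.le), hSΩ,
      tendsto_mleObj_add_smul_atTop hK hΩpsd hSΩ⟩
  have : Nonempty (Fin n) := not_isEmpty_iff.mp fun _ => hΩ0 (Subsingleton.elim _ _)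
  have hΩ : Ω.IsHermitian := isHermitian_iff_isSymm.mpr (hLsymm Ω hΩL)
  obtain ⟨lΩ, hpos, hlub⟩ := hK.exists_pos_isLUB_setOf_posDef_add_smul hΩ hΩpsd
  have hdet : Tendsto (fun l : ℝ => (K + l • Ω).det) (𝓝[<] lΩ) (𝓝 0) := by
    rw [← det_add_smul_eq_zero_of_isLUB hΩ hlub hpos]
    exact (by fun_prop : Continuous fun l : ℝ => (K + l • Ω).det).continuousWithinAt
  have hdetpos : ∀ᶠ l in 𝓝[<] lΩ, 0 < (K + l • Ω).det := by
    filter_upwards [Ioo_mem_nhdsLT hpos] with l hl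
    exact (hK.add_smul_of_lt_isLUB hlub hl.1 hl.2).det_pos
  have htr : Tendsto (fun l : ℝ => (S * (K + l • Ω)).trace) (𝓝[<] lΩ)
      (𝓝 (S * (K + lΩ • Ω)).trace) :=
    (by fun_prop : Continuous fun l : ℝ => (S * (K + l • Ω)).trace).continuousWithinAt
  exact ⟨lΩ, hpos, hlub, hdet,
    tendsto_mleObj_atTop_of_tendsto_det htr (tendsto_nhdsWithin_iff.2 ⟨hdet, hdetpos⟩)⟩

theorem stmt1 (n : ℕ) (S : Matrix (Fin n) (Fin n) ℝ) (hS : S.PosSemidef) (hS0 : S ≠ 0)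
    (L : Submodule ℝ (Matrix (Fin n) (Fin n) ℝ)) (hLsymm : ∀ A ∈ L, A.IsSymm)
    (hno : ¬ ∃ Ω : Matrix (Fin n) (Fin n) ℝ, Ω ∈ L ∧ Ω ≠ 0 ∧ Ω.PosSemidef ∧ Ω * S = 0)
    (K : Matrix (Fin n) (Fin n) ℝ) (hKL : K ∈ L) (hK : K.PosDef) :
    ∀ Ω ∈ L, Ω ≠ 0 → (Ω * Ω).trace = 1 →
      (Ω.PosSemidef →
        (∀ l : ℝ, 0 < l → (K + l • Ω).PosDef) ∧ 0 < (S * Ω).trace ∧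
        Tendsto (fun l : ℝ => mleObj S (K + l • Ω)) atTop atTop) ∧
      (¬ Ω.PosSemidef →
        ∃ lΩ : ℝ, 0 < lΩ ∧ IsLUB {l : ℝ | 0 < l ∧ (K + l • Ω).PosDef} lΩ ∧
          Tendsto (fun l : ℝ => (K + l • Ω).det) (𝓝[<] lΩ) (𝓝 0) ∧
          Tendsto (fun l : ℝ => mleObj S (K + l • Ω)) (𝓝[<] lΩ) atTop) :=
  stmt1_general n S hS L hLsymm hno K hK
end

section
/- Let n ≥ 2 and let d be an integer with 1 ≤ d ≤ n − 1. Let L ⊆ Sⁿ be a linear subspace with L ∩ Sⁿ₊₊ ≠ ∅ whose dimension m satisfies m ≥ dn − d(d−1)/2 − n + d + 1. Then L contains a nonzero PSD matrix of rank at most n − d. -/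
/-!
Rank reduction along faces of the PSD cone. Factor a PSD matrix `X ∈ L` of rank `r` as
`X = V Vᵀ` with `V` of full column rank. The matrices `V M Vᵀ`, `M` a symmetric `r × r` matrix,
form an `r(r+1)/2`-dimensional space of symmetric matrices, so if
`r(r+1)/2 + dim L ≥ n(n+1)/2 + 2` it meets `L` in some `Y = V M Vᵀ` not proportional to `X`.
With `t` the inverse of an eigenvalue of `M` of largest modulus, `X - tY = V (1 - tM) Vᵀ` is
PSD and nonzero, of rank `< r`. The bound on `dim L` guarantees the dimension count whenever
`r > n - d`, so starting from the positive definite matrix of `L` the rank can be pushed down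
to `n - d`.
-/

open Matrix Module

namespace Matrix

section Symmetric

variable (R ι : Type*)

def symmetricSubmodule [CommSemiring R] : Submodule R (Matrix ι ι R) where
  carrier := {A | A.IsSymm}
  add_mem' := IsSymm.add
  zero_mem' := isSymm_zero
  smul_mem' c _ hA := hA.smul c

def symmetricSubmoduleEquivSym2 [CommSemiring R] : symmetricSubmodule R ι ≃ₗ[R] (Sym2 ι → R) where
  toFun A := Sym2.lift ⟨fun i j => A.1 i j, fun i j => A.2.apply j i⟩
  invFun f := ⟨of fun i j => f s(i, j), IsSymm.ext fun i j => by simp [Sym2.eq_swap]⟩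
  map_add' _ _ := by ext ⟨i, j⟩; rfl
  map_smul' _ _ := by ext ⟨i, j⟩; rfl
  left_inv _ := rfl
  right_inv f := by ext ⟨i, j⟩; rfl

theorem finrank_symmetricSubmodule [Field R] [Fintype ι] :
    finrank R (symmetricSubmodule R ι) = (Fintype.card ι + 1).choose 2 := by
  classical
  rw [(symmetricSubmoduleEquivSym2 R ι).finrank_eq, finrank_fintype_fun_eq_card, Sym2.card]

end Symmetric

section Congruence

variable {R m n : Type*} [CommSemiring R] [Fintype n]

def congruenceLinearMap (V : Matrix m n R) : Matrix n n R →ₗ[R] Matrix m m R where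
  toFun M := V * M * Vᵀ
  map_add' A B := by rw [Matrix.mul_add, Matrix.add_mul]
  map_smul' c A := by rw [Matrix.mul_smul, Matrix.smul_mul, RingHom.id_apply]

@[simp]
theorem congruenceLinearMap_apply (V : Matrix m n R) (M : Matrix n n R) :
    congruenceLinearMap V M = V * M * Vᵀ :=
  rfl

theorem congruenceLinearMap_injective [Fintype m] [DecidableEq n] {V : Matrix m n R}
    {V' : Matrix n m R} (hV : V' * V = 1) : Function.Injective (congruenceLinearMap V) := by
  have hV_T : Vᵀ * V'ᵀ = 1 := by rw [← transpose_mul, hV, transpose_one]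
  refine Function.LeftInverse.injective (g := congruenceLinearMap V') fun M => ?_
  simp only [congruenceLinearMap_apply, Matrix.mul_assoc, hV_T, Matrix.mul_one]
  rw [← Matrix.mul_assoc, hV, Matrix.one_mul]

theorem IsSymm.mul_mul_transpose_same {M : Matrix n n R} (hM : M.IsSymm) (V : Matrix m n R) :
    (V * M * Vᵀ).IsSymm := by
  rw [IsSymm, transpose_mul, transpose_mul, transpose_transpose, hM.eq, Matrix.mul_assoc]

end Congruence

open scoped ComplexOrder in
theorem IsHermitian.exists_posSemidef_one_sub_smul_rank_lt {𝕜 ι : Type*} [RCLike 𝕜] [Fintype ι]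
    [DecidableEq ι] {M : Matrix ι ι 𝕜} (hM : M.IsHermitian) (hM0 : M ≠ 0) :
    ∃ t : ℝ, t ≠ 0 ∧ (1 - t • M).PosSemidef ∧ (1 - t • M).rank < Fintype.card ι := by
  set ev := hM.eigenvalues
  have : Nonempty ι := by
    by_contra h
    exact hM0 (Matrix.ext fun i => (not_nonempty_iff.1 h).elim i)
  obtain ⟨i₀, hi₀⟩ := Finite.exists_max fun i => |ev i|
  have hev₀ : ev i₀ ≠ 0 := by
    refine fun h => hM0 (hM.eigenvalues_eq_zero_iff.1 (funext fun i => ?_))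
    simpa [h] using hi₀ i
  set t := (ev i₀)⁻¹
  set U : Matrix ι ι 𝕜 := (hM.eigenvectorUnitary : Matrix ι ι 𝕜)
  have hdiag : 1 - t • M = U * diagonal (fun i => ((1 - t * ev i : ℝ) : 𝕜)) * star U := by
    have hU : U * star U = 1 := Unitary.coe_mul_star_self _
    have hD : diagonal (fun i => ((1 - t * ev i : ℝ) : 𝕜)) =
        1 - t • diagonal (RCLike.ofReal ∘ ev) := by
      ext i j
      rcases eq_or_ne i j with rfl | hij
      · simp [RCLike.real_smul_eq_coe_mul]
      · simp [hij]
    conv_lhs => rw [hM.spectral_theorem, Unitary.conjStarAlgAut_apply, ← hU]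
    rw [hD, Matrix.mul_sub, Matrix.sub_mul, Matrix.mul_one, Matrix.mul_smul, Matrix.smul_mul]
  refine ⟨t, inv_ne_zero hev₀, ?_⟩
  rw [hdiag]
  constructor
  · refine (PosSemidef.diagonal fun i => ?_).mul_mul_conjTranspose_same _
    have h := (le_abs_self (t * ev i)).trans <| by
      rw [abs_mul, abs_inv, inv_mul_le_iff₀ (abs_pos.2 hev₀), mul_one]
      exact hi₀ i
    exact RCLike.ofReal_nonneg.2 (sub_nonneg.2 h)
  · calc (U * diagonal (fun i => ((1 - t * ev i : ℝ) : 𝕜)) * star U).rank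
        ≤ (diagonal (fun i => ((1 - t * ev i : ℝ) : 𝕜))).rank :=
          (rank_mul_le_left _ _).trans (rank_mul_le_right _ _)
      _ < Fintype.card ι := by
          rw [rank_diagonal]
          refine Fintype.card_subtype_lt (x := i₀) ?_
          simp [t, inv_mul_cancel₀ hev₀]

open scoped ComplexOrder in
theorem PosSemidef.exists_mul_eq_one_and_eq_mul_conjTranspose {𝕜 n : Type*} [RCLike 𝕜]
    [Fintype n] [DecidableEq n] {X : Matrix n n 𝕜} (hX : X.PosSemidef) :
    ∃ (V : Matrix n (Fin X.rank) 𝕜) (V' : Matrix (Fin X.rank) n 𝕜), V' * V = 1 ∧ X = V * Vᴴ := by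
  set ev := hX.1.eigenvalues
  set U : Matrix n n 𝕜 := (hX.1.eigenvectorUnitary : Matrix n n 𝕜)
  set s : n → 𝕜 := fun i => (√(ev i) : 𝕜)
  have hs : ∀ i, ev i ≠ 0 → s i ≠ 0 := fun i hi =>
    RCLike.ofReal_ne_zero.2 ((Real.sqrt_ne_zero (hX.eigenvalues_nonneg i)).2 hi)
  let e : {i // ev i ≠ 0} ≃ Fin X.rank :=
    Fintype.equivFinOfCardEq hX.1.rank_eq_card_non_zero_eigs.symm
  refine ⟨(U * diagonal s).submatrix id (Subtype.val ∘ e.symm),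
    (diagonal s⁻¹ * star U).submatrix (Subtype.val ∘ e.symm) id, ?_, ?_⟩
  · rw [← submatrix_mul _ _ _ _ _ Function.bijective_id, Matrix.mul_assoc,
      ← Matrix.mul_assoc (star U), Unitary.coe_star_mul_self, Matrix.one_mul, diagonal_mul_diagonal]
    ext a b
    rcases eq_or_ne a b with rfl | hab
    · simp [inv_mul_cancel₀ (hs _ (e.symm a).2)]
    · simpa [hab] using diagonal_apply_ne _ ((Subtype.val_injective.comp e.symm.injective).ne hab)
  · have hzero : ∀ i j, ¬ ev j ≠ 0 → (U * diagonal s) i j = 0 := fun i j hj => by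
      simp [s, not_not.1 hj]
    have hss : diagonal s * (diagonal s)ᴴ = diagonal (RCLike.ofReal ∘ ev) := by
      rw [diagonal_conjTranspose, diagonal_mul_diagonal]
      congr 1
      ext i
      simp only [s, Function.comp_apply, Pi.star_apply, RCLike.star_def, RCLike.conj_ofReal]
      rw [← RCLike.ofReal_mul, Real.mul_self_sqrt (hX.eigenvalues_nonneg i)]
    have hX' : X = (U * diagonal s) * (U * diagonal s)ᴴ := by
      rw [conjTranspose_mul, Matrix.mul_assoc, ← Matrix.mul_assoc (diagonal s), hss,
        ← Matrix.mul_assoc, ← star_eq_conjTranspose]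
      exact hX.1.spectral_theorem
    refine hX'.trans ?_
    rw [conjTranspose_submatrix]
    generalize U * diagonal s = W at hzero ⊢
    ext i k
    simp only [mul_apply, submatrix_apply, id, Function.comp_apply]
    rw [e.symm.sum_comp (fun j : {j // ev j ≠ 0} => W i j * Wᴴ j k),
      ← Fintype.sum_subtype_add_sum_subtype (fun j => ev j ≠ 0),
      Fintype.sum_eq_zero (fun j : {j // ¬ev j ≠ 0} => W i j * Wᴴ j k)
        fun j => by rw [hzero i j j.2, zero_mul], add_zero]

theorem exists_posSemidef_rank_lt_of_finrank_le {n ι : Type*} [Fintype n] [Fintype ι]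
    [DecidableEq ι] {L : Submodule ℝ (Matrix n n ℝ)} (hL : L ≤ symmetricSubmodule ℝ n)
    {V : Matrix n ι ℝ} {V' : Matrix ι n ℝ} (hV : V' * V = 1) (hX : V * Vᵀ ∈ L)
    (hdim : (Fintype.card n + 1).choose 2 + 2 ≤ finrank ℝ L + (Fintype.card ι + 1).choose 2) :
    ∃ X ∈ L, X ≠ 0 ∧ X.PosSemidef ∧ X.rank < Fintype.card ι := by
  set W := (symmetricSubmodule ℝ ι).map (congruenceLinearMap V)
  have hWL : 2 ≤ finrank ℝ ↥(W ⊓ L) := by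
    have hW : finrank ℝ W = (Fintype.card ι + 1).choose 2 := by
      rw [← (Submodule.equivMapOfInjective _ (congruenceLinearMap_injective hV) _).finrank_eq,
        finrank_symmetricSubmodule]
    have hWsymm : W ≤ symmetricSubmodule ℝ n := by
      rintro _ ⟨M, hM, rfl⟩
      exact IsSymm.mul_mul_transpose_same hM V
    have hsup := Submodule.finrank_mono (sup_le hWsymm hL)
    rw [finrank_symmetricSubmodule] at hsup
    have := Submodule.finrank_sup_add_finrank_inf_eq W L
    omega
  obtain ⟨Y, hYWL, hYX⟩ : ∃ Y ∈ W ⊓ L, Y ∉ ℝ ∙ (V * Vᵀ) := by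
    by_contra! h
    have hspan : finrank ℝ (ℝ ∙ (V * Vᵀ)) ≤ 1 := by
      simpa using finrank_span_le_card ({V * Vᵀ} : Set (Matrix n n ℝ))
    have := Submodule.finrank_mono (show W ⊓ L ≤ ℝ ∙ (V * Vᵀ) from h)
    omega
  obtain ⟨⟨M, hM, rfl⟩, hYL⟩ := hYWL
  have hM0 : M ≠ 0 := by
    rintro rfl
    simp at hYX
  obtain ⟨t, ht, hpsd, hrank⟩ :=
    (isHermitian_iff_isSymm.2 hM).exists_posSemidef_one_sub_smul_rank_lt hM0
  have hX' : V * (1 - t • M) * Vᵀ = V * Vᵀ - t • congruenceLinearMap V M := by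
    simp [Matrix.mul_sub, Matrix.sub_mul]
  refine ⟨V * (1 - t • M) * Vᵀ, ?_, ?_, ?_, ?_⟩
  · rw [hX']
    exact L.sub_mem hX (L.smul_mem t hYL)
  · rw [hX', sub_ne_zero]
    intro h
    refine hYX (Submodule.mem_span_singleton.2 ⟨t⁻¹, ?_⟩)
    rw [h, smul_smul, inv_mul_cancel₀ ht, one_smul]
  · simpa using hpsd.mul_mul_conjTranspose_same V
  · exact ((rank_mul_le_left _ _).trans (rank_mul_le_right _ _)).trans_lt hrank

theorem exists_posSemidef_rank_le_of_finrank_le {n : Type*} [Fintype n] [DecidableEq n]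
    {L : Submodule ℝ (Matrix n n ℝ)} (hL : L ≤ symmetricSubmodule ℝ n) {k : ℕ}
    (hdim : ∀ r, k < r → (Fintype.card n + 1).choose 2 + 2 ≤ finrank ℝ L + (r + 1).choose 2)
    {X : Matrix n n ℝ} (hXL : X ∈ L) (hX : X.PosSemidef) (hX0 : X ≠ 0) :
    ∃ Ω ∈ L, Ω ≠ 0 ∧ Ω.PosSemidef ∧ Ω.rank ≤ k := by
  induction hr : X.rank using Nat.strong_induction_on generalizing X with
  | _ r ih =>
    by_cases hrk : r ≤ k
    · exact ⟨X, hXL, hX0, hX, hr ▸ hrk⟩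
    obtain ⟨V, V', hV, hXV⟩ := hX.exists_mul_eq_one_and_eq_mul_conjTranspose
    rw [conjTranspose_eq_transpose_of_trivial] at hXV
    obtain ⟨X', hX'L, hX'0, hX', hlt⟩ := exists_posSemidef_rank_lt_of_finrank_le hL hV (hXV ▸ hXL)
      (by simpa [hr] using hdim r (not_le.1 hrk))
    exact ih _ (by simpa [hr] using hlt) hX'L hX' hX'0 rfl

end Matrix

theorem choose_two_add_two_le_of_sub_lt {n d m r : ℕ} (hdn : d ≤ n)
    (hm : (d : ℤ) * n - d * (d - 1) / 2 - n + d + 1 ≤ (m : ℤ)) (hr : n - d < r) :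
    (n + 1).choose 2 + 2 ≤ m + (r + 1).choose 2 := by
  have htwo : ∀ k : ℕ, 2 * (k + 1).choose 2 = (k + 1) * k := fun k => by
    rw [Nat.choose_two_right, Nat.mul_div_cancel' (Nat.even_mul_pred_self (k + 1)).two_dvd]
    rfl
  have hd : 2 * ((d : ℤ) * (d - 1) / 2) = d * (d - 1) :=
    Int.mul_ediv_cancel' (Int.even_mul_pred_self d).two_dvd
  have hn := htwo n
  have hr' := htwo r
  zify [hdn] at hn hr' hr ⊢
  nlinarith

theorem stmt2_general (n d m : ℕ) (hd1 : 1 ≤ d) (hdn : d ≤ n - 1)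
    (L : Submodule ℝ (Matrix (Fin n) (Fin n) ℝ)) (hLsymm : ∀ A ∈ L, A.IsSymm)
    (hLpd : ∃ K ∈ L, K.PosDef)
    (hdim : Module.finrank ℝ L = m)
    (hm : (d : ℤ) * n - d * (d - 1) / 2 - n + d + 1 ≤ (m : ℤ)) :
    ∃ Ω ∈ L, Ω ≠ 0 ∧ Ω.PosSemidef ∧ Ω.rank ≤ n - d := by
  obtain ⟨K, hKL, hK⟩ := hLpd
  have hK0 : K ≠ 0 := by
    rintro rfl
    simpa using hK.diag_pos (i := ⟨0, by omega⟩)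
  refine exists_posSemidef_rank_le_of_finrank_le hLsymm (fun r hr => ?_) hKL hK.posSemidef hK0
  rw [Fintype.card_fin, hdim]
  exact choose_two_add_two_le_of_sub_lt (by omega) hm hr

theorem stmt2 (n d m : ℕ) (hn : 2 ≤ n) (hd1 : 1 ≤ d) (hdn : d ≤ n - 1)
    (L : Submodule ℝ (Matrix (Fin n) (Fin n) ℝ)) (hLsymm : ∀ A ∈ L, A.IsSymm)
    (hLpd : ∃ K ∈ L, K.PosDef)
    (hdim : Module.finrank ℝ L = m)
    (hm : (d : ℤ) * n - d * (d - 1) / 2 - n + d + 1 ≤ (m : ℤ)) :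
    ∃ Ω ∈ L, Ω ≠ 0 ∧ Ω.PosSemidef ∧ Ω.rank ≤ n - d :=
  stmt2_general n d m hd1 hdn L hLsymm hLpd hdim hm
end

section
/- Let n, d, m be integers with 1 ≤ d ≤ n and m ≤ nd − d(d−1)/2. Then there exists a real polynomial P in the entries of an m-tuple of n×n symmetric matrices, not identically zero, such that whenever Ω₁,…,Ω_m ∈ Sⁿ are linearly independent and P(Ω₁,…,Ω_m) ≠ 0, their span L has the following property: there exists a d-dimensional linear subspace K ⊆ ℝⁿ such that no nonzero Ω ∈ L satisfies K ⊆ ker(Ω). -/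
open Matrix

theorem stmt7 (n d m : ℕ) (hd1 : 1 ≤ d) (hdn : d ≤ n)
    (hm : (m : ℤ) ≤ (n : ℤ) * d - d * (d - 1) / 2) :
    ∃ P : MvPolynomial (Fin m × Fin n × Fin n) ℝ,
      (∃ Ωs : Fin m → Matrix (Fin n) (Fin n) ℝ, (∀ i, (Ωs i).IsSymm) ∧
        MvPolynomial.eval (fun x => Ωs x.1 x.2.1 x.2.2) P ≠ 0) ∧
      ∀ Ωs : Fin m → Matrix (Fin n) (Fin n) ℝ, (∀ i, (Ωs i).IsSymm) →
        LinearIndependent ℝ Ωs →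
        MvPolynomial.eval (fun x => Ωs x.1 x.2.1 x.2.2) P ≠ 0 →
        ∃ K : Submodule ℝ (Fin n → ℝ), Module.finrank ℝ K = d ∧
          ∀ Ω ∈ Submodule.span ℝ (Set.range Ωs),
            (∀ x ∈ K, Ω.mulVec x = 0) → Ω = 0 := by
  classical
  -- the index set of "free" positions in the first d columns of a symmetric matrix
  set S : Finset (Fin n × Fin n) :=
    Finset.univ.filter (fun p => p.2.val < d ∧ p.2 ≤ p.1) with hSdef
  have hScard : S.card = ∑ k ∈ Finset.range d, (n - k) := by
    rw [hSdef, Finset.card_filter, Fintype.sum_prod_type_right]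
    have h1 : ∀ k : Fin n,
        (∑ j : Fin n, if k.val < d ∧ k ≤ j then 1 else 0)
          = if k.val < d then n - k.val else 0 := by
      intro k
      by_cases hk : k.val < d
      · simp only [hk, true_and, if_true]
        rw [← Finset.card_filter]
        have hI : Finset.filter (fun j => k ≤ j) Finset.univ = Finset.Ici k := by
          ext j; simp
        rw [hI, Fin.card_Ici]
      · simp [hk]
    rw [Finset.sum_congr rfl (fun k _ => h1 k)]
    rw [Fin.sum_univ_eq_sum_range (fun k => if k < d then n - k else 0)]
    rw [← Finset.sum_filter]
    congr 1
    ext k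
    simp only [Finset.mem_filter, Finset.mem_range]
    omega
  have hmS : m ≤ S.card := by
    have h2 : ((2:ℤ)) ∣ (d:ℤ) * ((d:ℤ) - 1) := by
      have he := Int.even_mul_succ_self ((d:ℤ) - 1)
      have : ((d:ℤ) - 1) * ((d:ℤ) - 1 + 1) = (d:ℤ) * ((d:ℤ) - 1) := by ring
      rw [this] at he
      exact he.two_dvd
    have hdiv : 2 * ((d:ℤ) * ((d:ℤ) - 1) / 2) = (d:ℤ) * ((d:ℤ) - 1) :=
      Int.mul_ediv_cancel' h2
    have key : (2:ℤ) * m ≤ 2 * ((n:ℤ) * d) - (d:ℤ) * ((d:ℤ) - 1) := by linarith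
    have hg : ((∑ k ∈ Finset.range d, k : ℕ) : ℤ) * 2 = (d:ℤ) * ((d:ℤ) - 1) := by
      have hgauss := Finset.sum_range_id_mul_two d
      have : (((∑ k ∈ Finset.range d, k) * 2 : ℕ) : ℤ) = ((d * (d - 1) : ℕ) : ℤ) := by
        exact_mod_cast congrArg (Nat.cast : ℕ → ℤ) hgauss
      push_cast [Nat.cast_sub hd1] at this ⊢
      linarith
    have hcast : ((∑ k ∈ Finset.range d, (n - k) : ℕ) : ℤ)
        = ∑ k ∈ Finset.range d, ((n : ℤ) - k) := by
      rw [Nat.cast_sum]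
      refine Finset.sum_congr rfl fun k hk => ?_
      have hkn : k ≤ n := le_trans (Nat.le_of_lt (Finset.mem_range.mp hk)) hdn
      exact Nat.cast_sub hkn
    have hsum2 : (∑ k ∈ Finset.range d, ((n:ℤ) - k)) * 2
        = 2 * ((n:ℤ) * d) - (d:ℤ) * ((d:ℤ) - 1) := by
      rw [Finset.sum_sub_distrib, Finset.sum_const, Finset.card_range]
      rw [← Nat.cast_sum] at *
      rw [sub_mul]
      rw [← hg]
      push_cast
      ring
    have : (m : ℤ) ≤ (S.card : ℤ) := by
      rw [hScard, hcast] at *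
      linarith
    exact_mod_cast this
  -- the injection from Fin m into S
  let e := S.equivFin
  let f : Fin m → Fin n × Fin n := fun i => (e.symm (Fin.castLE hmS i) : Fin n × Fin n)
  have hfS : ∀ i, f i ∈ S := fun i => (e.symm (Fin.castLE hmS i)).2
  have hfinj : Function.Injective f := by
    intro i j h
    exact Fin.castLE_injective hmS (e.symm.injective (Subtype.ext h))
  have hcol : ∀ i, (f i).2.val < d := fun i => by
    have := hfS i; rw [hSdef, Finset.mem_filter] at this; exact this.2.1
  have hle : ∀ i, (f i).2 ≤ (f i).1 := fun i => by
    have := hfS i; rw [hSdef, Finset.mem_filter] at this; exact this.2.2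
  have heval : ∀ Ωs : Fin m → Matrix (Fin n) (Fin n) ℝ,
      MvPolynomial.eval (fun x : Fin m × Fin n × Fin n => Ωs x.1 x.2.1 x.2.2)
        (Matrix.of fun i l : Fin m => MvPolynomial.X (i, f l)).det
      = (Matrix.of fun i l : Fin m => Ωs i (f l).1 (f l).2).det := by
    intro Ωs
    rw [RingHom.map_det]
    congr 1
    ext i l
    simp [RingHom.mapMatrix_apply, MvPolynomial.eval_X]
  refine ⟨(Matrix.of fun i l : Fin m => MvPolynomial.X (i, f l)).det, ?_, ?_⟩
  · -- existence of a symmetric tuple where P does not vanish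
    refine ⟨(fun i => Matrix.of fun j k =>
        if (j, k) = f i ∨ (k, j) = f i then (1:ℝ) else 0 :
        Fin m → Matrix (Fin n) (Fin n) ℝ), ?_, ?_⟩
    · intro i
      refine Matrix.IsSymm.ext fun j k => ?_
      simp only [Matrix.of_apply]
      exact if_congr or_comm rfl rfl
    · rw [heval (fun i => Matrix.of fun j k =>
        if (j, k) = f i ∨ (k, j) = f i then (1:ℝ) else 0)]
      have hone : (Matrix.of fun i l : Fin m =>
          (Matrix.of fun j k => if (j, k) = f i ∨ (k, j) = f i then (1:ℝ) else 0)
            (f l).1 (f l).2) = (1 : Matrix (Fin m) (Fin m) ℝ) := by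
        ext i l
        simp only [Matrix.of_apply, Matrix.one_apply, Prod.mk.eta]
        by_cases h : i = l
        · subst h; simp
        · rw [if_neg h, if_neg]
          rintro (h1 | h2)
          · exact h (hfinj h1).symm
          · have e1 : (f i).1 = (f l).2 := by rw [← h2]
            have e2 : (f i).2 = (f l).1 := by rw [← h2]
            have heq : (f l).1 = (f l).2 := by
              refine le_antisymm ?_ (hle l)
              rw [← e2, ← e1]; exact hle i
            have : f i = f l := Prod.ext (by rw [e1, ← heq]) (by rw [e2, heq])
            exact h (hfinj this)
      rw [hone, Matrix.det_one]
      exact one_ne_zero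
  · -- the generic property
    intro Ωs hsym hli hP
    rw [heval] at hP
    refine ⟨Submodule.span ℝ
      (Set.range fun k : Fin d => Pi.basisFun ℝ (Fin n) (Fin.castLE hdn k)), ?_, ?_⟩
    · have hli2 : LinearIndependent ℝ
          (fun k : Fin d => Pi.basisFun ℝ (Fin n) (Fin.castLE hdn k)) :=
        (Pi.basisFun ℝ (Fin n)).linearIndependent.comp _ (Fin.castLE_injective hdn)
      rw [finrank_span_eq_card hli2]
      simp
    · intro Ω hΩ hker
      obtain ⟨c, hc⟩ := (Submodule.mem_span_range_iff_exists_fun ℝ).mp hΩ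
      have hcol0 : ∀ l : Fin m, Ω (f l).1 (f l).2 = 0 := by
        intro l
        have hcast2 : Fin.castLE hdn ⟨(f l).2.val, hcol l⟩ = (f l).2 := Fin.ext rfl
        have hmem : Pi.single (f l).2 (1:ℝ) ∈ Submodule.span ℝ
            (Set.range fun k : Fin d => Pi.basisFun ℝ (Fin n) (Fin.castLE hdn k)) := by
          apply Submodule.subset_span
          exact ⟨⟨(f l).2.val, hcol l⟩, by simp only [hcast2, Pi.basisFun_apply]⟩
        have h0 := hker _ hmem
        have h1 := congrFun h0 (f l).1
        simpa using h1
      have hMc : (Matrix.of fun i l : Fin m => Ωs i (f l).1 (f l).2)ᵀ.mulVec c = 0 := by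
        ext l
        have h1 := hcol0 l
        rw [← hc] at h1
        simpa [Matrix.mulVec, dotProduct, Matrix.transpose_apply,
          Finset.sum_apply, Matrix.sum_apply, Matrix.smul_apply, smul_eq_mul,
          mul_comm] using h1
      have hdet : (Matrix.of fun i l : Fin m => Ωs i (f l).1 (f l).2)ᵀ.det ≠ 0 := by
        rwa [Matrix.det_transpose]
      have hc0 : c = 0 := Matrix.eq_zero_of_mulVec_eq_zero hdet hMc
      rw [← hc, hc0]
      simp
end

section
/- Let 1 ≤ d ≤ n, let S ∈ V(n,d), and let Ω ∈ Sⁿ. Then ΩS = 0 if and only if tr(ΩX) = 0 for every X ∈ T_S, where T_S = {X ∈ Sⁿ : Xv ∈ range(S) for all v ∈ ker(S)}. -/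
open Matrix

theorem stmt8 (n d : ℕ) (hd1 : 1 ≤ d) (hdn : d ≤ n)
    (S : Matrix (Fin n) (Fin n) ℝ) (hS : S.IsSymm) (hrank : S.rank = d)
    (Ω : Matrix (Fin n) (Fin n) ℝ) (hΩ : Ω.IsSymm) :
    Ω * S = 0 ↔
      ∀ X : Matrix (Fin n) (Fin n) ℝ, X.IsSymm →
        (∀ v : Fin n → ℝ, S.mulVec v = 0 → ∃ w : Fin n → ℝ, S.mulVec w = X.mulVec v) →
        (Ω * X).trace = 0 := by
  constructor
  · intro h X hX hT
    have hSΩ : S * Ω = 0 := by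
      have h' := congrArg Matrix.transpose h
      rwa [Matrix.transpose_mul, hS.eq, hΩ.eq, Matrix.transpose_zero] at h'
    -- key: Ω * (X * Ω) = 0
    have key : Ω * (X * Ω) = 0 := by
      ext i j
      have h1 : S.mulVec (Ω.mulVec (Pi.single j 1)) = 0 := by
        rw [Matrix.mulVec_mulVec, hSΩ, Matrix.zero_mulVec]
      obtain ⟨w, hw⟩ := hT _ h1
      have h2 : (Ω * (X * Ω)).mulVec (Pi.single j 1) = 0 := by
        rw [← Matrix.mulVec_mulVec, ← Matrix.mulVec_mulVec, ← hw,
          Matrix.mulVec_mulVec, h, Matrix.zero_mulVec]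
      have h3 := congrFun h2 i
      simpa using h3
    have hsq : (Ω * X) ^ 2 = 0 := by
      rw [sq, mul_assoc, ← mul_assoc X Ω X, ← mul_assoc, ← mul_assoc, mul_assoc Ω X Ω,
        key, zero_mul]
    exact (Matrix.isNilpotent_trace_of_isNilpotent ⟨2, hsq⟩).eq_zero
  · intro h
    set X : Matrix (Fin n) (Fin n) ℝ := Ω * (S * S) + S * S * Ω with hXdef
    have hXsymm : X.IsSymm := by
      unfold Matrix.IsSymm
      simp [hXdef, Matrix.transpose_add, Matrix.transpose_mul, hS.eq, hΩ.eq, add_comm, mul_assoc]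
    have hprop : ∀ v : Fin n → ℝ, S.mulVec v = 0 →
        ∃ w : Fin n → ℝ, S.mulVec w = X.mulVec v := by
      intro v hv
      refine ⟨S.mulVec (Ω.mulVec v), ?_⟩
      rw [hXdef, Matrix.add_mulVec, ← Matrix.mulVec_mulVec, ← Matrix.mulVec_mulVec,
        ← Matrix.mulVec_mulVec, ← Matrix.mulVec_mulVec, hv]
      simp [Matrix.mulVec_mulVec]
    have ht := h X hXsymm hprop
    have e1 : Ω * X = Ω * Ω * (S * S) + Ω * (S * S) * Ω := by
      rw [hXdef]; noncomm_ring
    rw [e1, Matrix.trace_add, Matrix.trace_mul_comm (Ω * (S * S)) Ω, ← mul_assoc Ω Ω (S * S)] at ht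
    have ht2 : ((Ω * Ω * (S * S)).trace : ℝ) = 0 := by linarith
    have key : ((Ω * S)ᵀ * (Ω * S)).trace = 0 := by
      have e2 : (Ω * S)ᵀ * (Ω * S) = S * (Ω * Ω * S) := by
        rw [Matrix.transpose_mul, hS.eq, hΩ.eq]; noncomm_ring
      rw [e2, Matrix.trace_mul_comm]
      have e3 : Ω * Ω * S * S = Ω * Ω * (S * S) := by rw [mul_assoc]
      rw [e3, ht2]
    -- trace (Aᵀ * A) = sum of squares of entries of A
    set A : Matrix (Fin n) (Fin n) ℝ := Ω * S with hA
    have hsum : ∑ j, ∑ i, A i j * A i j = 0 := by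
      rw [← key]
      simp [Matrix.trace, Matrix.mul_apply, Matrix.diag, Matrix.transpose_apply]
    have hzero : ∀ j i, A i j * A i j = 0 := by
      intro j i
      have houter := (Finset.sum_eq_zero_iff_of_nonneg (fun j _ =>
        Finset.sum_nonneg fun i _ => mul_self_nonneg (A i j))).mp hsum j (Finset.mem_univ j)
      exact (Finset.sum_eq_zero_iff_of_nonneg (fun i _ =>
        mul_self_nonneg (A i j))).mp houter i (Finset.mem_univ i)
    ext i j
    simpa using mul_self_eq_zero.mp (hzero j i)
end

section
/- Let 1 ≤ d ≤ n, let S ∈ V(n,d), and let L ⊆ Sⁿ be a linear subspace. Then there exists a nonzero Ω ∈ L with ΩS = 0 if and only if π_L(T_S) is a proper subspace of L, where T_S = {X ∈ Sⁿ : Xv ∈ range(S) for all v ∈ ker(S)} (i.e., if and only if the restriction of π_L to V(n,d) is not a submersion at S). -/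
/-!
Let `Q` be the orthogonal projection onto `ker S`. A symmetric `X` lies in `T_S` exactly when
`Q X Q = 0`, so the trace-orthogonal complement of `T_S` among symmetric matrices consists of the
`Ω` with `Q Ω Q = Ω`, i.e. with `Ω S = 0`. If such an `Ω ∈ L` were `π_L X` with `X ∈ T_S`, then
`tr(Ω²) = tr(X Ω) = 0`, forcing `Ω = 0`. Conversely, if `π_L(T_S)` is a proper subspace of `L`,
a dimension count gives a nonzero `Ω ∈ L` orthogonal to it, hence to `T_S`, and then `Ω S = 0`.
-/

open Matrix

lemma LinearMap.BilinForm.exists_ne_zero_mem_forall_apply_eq_zero {K E : Type*} [Field K]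
    [AddCommGroup E] [Module K E] [FiniteDimensional K E] (B : LinearMap.BilinForm K E)
    {M L : Submodule K E} (h : M < L) : ∃ Ω ∈ L, Ω ≠ 0 ∧ ∀ A ∈ M, B A Ω = 0 := by
  let f : L →ₗ[K] Module.Dual K M := (B.flip.domRestrict L).compl₂ M.subtype
  have hker : LinearMap.ker f ≠ ⊥ := LinearMap.ker_ne_bot_of_finrank_lt <| by
    rw [Subspace.dual_finrank_eq]; exact Submodule.finrank_lt_finrank_of_lt h
  obtain ⟨⟨Ω, hΩL⟩, hΩ, hΩ0⟩ := Submodule.exists_mem_ne_zero_of_ne_bot hker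
  exact ⟨Ω, hΩL, fun h0 => hΩ0 (by simp [h0]), fun A hA => LinearMap.congr_fun hΩ ⟨A, hA⟩⟩

namespace Matrix

variable {ι : Type*} [Fintype ι]

lemma IsSymm.eq_zero_of_trace_mul_self_eq_zero {A : Matrix ι ι ℝ} (hA : A.IsSymm)
    (h : (A * A).trace = 0) : A = 0 :=
  trace_conjTranspose_mul_self_eq_zero_iff.mp
    (by rwa [conjTranspose_eq_transpose_of_trivial, hA.eq])

lemma IsSymm.conjugate {R : Type*} [CommSemiring R] {Q A : Matrix ι ι R} (hQ : Q.IsSymm)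
    (hA : A.IsSymm) : (Q * A * Q).IsSymm := by
  rw [IsSymm, transpose_mul, transpose_mul, hQ.eq, hA.eq, Matrix.mul_assoc]

lemma trace_mul_eq_zero_of_mul_mul_eq_zero {R : Type*} [CommRing R] {Q X Ω : Matrix ι ι R}
    (hX : Q * X * Q = 0) (hΩ : Q * Ω * Q = Ω) : (X * Ω).trace = 0 := by
  rw [← hΩ, ← Matrix.mul_assoc, trace_mul_comm, ← Matrix.mul_assoc, ← Matrix.mul_assoc, hX,
    Matrix.zero_mul, trace_zero]

lemma mul_mul_eq_self_of_forall_trace_mul_eq_zero {Q Ω : Matrix ι ι ℝ} (hQ : Q.IsSymm)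
    (hQQ : Q * Q = Q) (hΩ : Ω.IsSymm)
    (h : ∀ X : Matrix ι ι ℝ, X.IsSymm → Q * X * Q = 0 → (X * Ω).trace = 0) :
    Q * Ω * Q = Ω := by
  have hQΩQ : Q * (Q * Ω * Q) * Q = Q * Ω * Q := by
    rw [← Matrix.mul_assoc, ← Matrix.mul_assoc, hQQ, Matrix.mul_assoc, hQQ]
  set A := Ω - Q * Ω * Q
  have hA : A.IsSymm := hΩ.sub (hQ.conjugate hΩ)
  have hQAQ : Q * A * Q = 0 := by rw [Matrix.mul_sub, Matrix.sub_mul, hQΩQ, sub_self]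
  have hAA : (A * A).trace = 0 := by
    rw [Matrix.mul_sub, trace_sub, h A hA hQAQ,
      trace_mul_eq_zero_of_mul_mul_eq_zero hQAQ hQΩQ, sub_zero]
  exact (sub_eq_zero.mp (hA.eq_zero_of_trace_mul_self_eq_zero hAA)).symm

/-- `T_S`, the tangent space at `S` to the manifold of symmetric matrices of rank `rank S`. -/
def tangentSpace (S : Matrix ι ι ℝ) : Submodule ℝ (Matrix ι ι ℝ) where
  carrier := {X | X.IsSymm ∧ ∀ v, S *ᵥ v = 0 → ∃ w, S *ᵥ w = X *ᵥ v}
  add_mem' {X Y} hX hY := by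
    refine ⟨hX.1.add hY.1, fun v hv => ?_⟩
    obtain ⟨w₁, hw₁⟩ := hX.2 v hv
    obtain ⟨w₂, hw₂⟩ := hY.2 v hv
    exact ⟨w₁ + w₂, by rw [mulVec_add, add_mulVec, hw₁, hw₂]⟩
  zero_mem' := ⟨isSymm_zero, fun _ _ => ⟨0, by simp⟩⟩
  smul_mem' c X hX := by
    refine ⟨hX.1.smul c, fun v hv => ?_⟩
    obtain ⟨w, hw⟩ := hX.2 v hv
    exact ⟨c • w, by rw [mulVec_smul, smul_mulVec, hw]⟩

section KernelProjection

variable [DecidableEq ι]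

lemma cfc_mul_cfc (f g : ℝ → ℝ) (S : Matrix ι ι ℝ) :
    cfc f S * cfc g S = cfc (fun x => f x * g x) S :=
  (cfc_mul f g S (S.finite_real_spectrum.continuousOn f)
    (S.finite_real_spectrum.continuousOn g)).symm

lemma cfc_mul_self {S : Matrix ι ι ℝ} (hS : IsSelfAdjoint S) (f : ℝ → ℝ) :
    cfc f S * S = cfc (fun x => f x * x) S := by
  conv_lhs => arg 2; rw [← cfc_id' ℝ S]
  exact cfc_mul_cfc f _ S

lemma self_mul_cfc {S : Matrix ι ι ℝ} (hS : IsSelfAdjoint S) (f : ℝ → ℝ) :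
    S * cfc f S = cfc (fun x => x * f x) S := by
  conv_lhs => arg 1; rw [← cfc_id' ℝ S]
  exact cfc_mul_cfc _ f S

noncomputable def kerProj (S : Matrix ι ι ℝ) : Matrix ι ι ℝ :=
  cfc (fun x : ℝ => if x = 0 then 1 else 0) S

lemma kerProj_isSymm (S : Matrix ι ι ℝ) : (kerProj S).IsSymm := by
  have h : IsSelfAdjoint (kerProj S) := cfc_predicate _ S
  rwa [← isHermitian_iff_isSelfAdjoint, isHermitian_iff_isSymm] at h

lemma kerProj_mul_self (S : Matrix ι ι ℝ) : kerProj S * kerProj S = kerProj S := by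
  rw [kerProj, cfc_mul_cfc]
  congr 1; funext x; split_ifs <;> norm_num

variable {S : Matrix ι ι ℝ}

lemma kerProj_mul (hS : IsSelfAdjoint S) : kerProj S * S = 0 := by
  rw [kerProj, cfc_mul_self hS, ← cfc_const_zero ℝ S]
  congr 1; funext x; split_ifs <;> simp_all

lemma mul_kerProj (hS : IsSelfAdjoint S) : S * kerProj S = 0 := by
  rw [kerProj, self_mul_cfc hS, ← cfc_const_zero ℝ S]
  congr 1; funext x; split_ifs <;> simp_all

lemma exists_mul_eq_one_sub_kerProj (hS : IsSelfAdjoint S) :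
    ∃ P : Matrix ι ι ℝ, P * S = 1 - kerProj S ∧ S * P = 1 - kerProj S := by
  have h : 1 - kerProj S = cfc (fun x : ℝ => if x = 0 then 0 else 1) S := by
    rw [kerProj, ← cfc_one ℝ S, ← cfc_sub _ _ S (S.finite_real_spectrum.continuousOn _)
      (S.finite_real_spectrum.continuousOn _)]
    congr 1; funext x; split_ifs <;> norm_num
  -- the pseudo-inverse of `S`, relying on `(0 : ℝ)⁻¹ = 0`
  refine ⟨cfc (fun x : ℝ => x⁻¹) S, ?_, ?_⟩
  · rw [cfc_mul_self hS, h]; congr 1; funext x; split_ifs <;> simp_all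
  · rw [self_mul_cfc hS, h]; congr 1; funext x; split_ifs <;> simp_all

lemma kerProj_mulVec_of_mulVec_eq_zero (hS : IsSelfAdjoint S) {v : ι → ℝ} (hv : S *ᵥ v = 0) :
    kerProj S *ᵥ v = v := by
  obtain ⟨P, hPS, -⟩ := exists_mul_eq_one_sub_kerProj hS
  have h : (1 - kerProj S) *ᵥ v = 0 := by rw [← hPS, ← mulVec_mulVec, hv, mulVec_zero]
  rw [sub_mulVec, one_mulVec, sub_eq_zero] at h
  exact h.symm

lemma kerProj_mul_mul_kerProj_eq_zero_iff (hS : IsSelfAdjoint S) (X : Matrix ι ι ℝ) :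
    kerProj S * X * kerProj S = 0 ↔ ∀ v, S *ᵥ v = 0 → ∃ w, S *ᵥ w = X *ᵥ v := by
  constructor
  · intro hX v hv
    obtain ⟨P, -, hSP⟩ := exists_mul_eq_one_sub_kerProj hS
    refine ⟨P *ᵥ X *ᵥ v, ?_⟩
    rw [mulVec_mulVec, hSP, sub_mulVec, one_mulVec, sub_eq_self]
    conv_lhs => rw [← kerProj_mulVec_of_mulVec_eq_zero hS hv, mulVec_mulVec, mulVec_mulVec, hX]
    exact zero_mulVec v
  · intro hX
    refine ext_iff_mulVec.mpr fun v => ?_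
    obtain ⟨w, hw⟩ := hX (kerProj S *ᵥ v) (by rw [mulVec_mulVec, mul_kerProj hS, zero_mulVec])
    rw [← mulVec_mulVec, ← mulVec_mulVec, ← hw, mulVec_mulVec, kerProj_mul hS, zero_mulVec,
      zero_mulVec]

lemma mul_eq_zero_iff_kerProj_mul_mul_kerProj_eq (hS : IsSelfAdjoint S) {Ω : Matrix ι ι ℝ}
    (hΩ : Ω.IsSymm) : Ω * S = 0 ↔ kerProj S * Ω * kerProj S = Ω := by
  constructor
  · intro hΩS
    obtain ⟨P, -, hSP⟩ := exists_mul_eq_one_sub_kerProj hS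
    have hΩQ : Ω * kerProj S = Ω := by
      have h : Ω * (1 - kerProj S) = 0 := by rw [← hSP, ← Matrix.mul_assoc, hΩS, Matrix.zero_mul]
      rwa [Matrix.mul_sub, Matrix.mul_one, sub_eq_zero, eq_comm] at h
    have hQΩ : kerProj S * Ω = Ω := by
      simpa only [transpose_mul, hΩ.eq, (kerProj_isSymm S).eq] using congrArg transpose hΩQ
    rw [hQΩ, hΩQ]
  · intro h
    rw [← h, Matrix.mul_assoc, kerProj_mul hS, Matrix.mul_zero]

lemma mem_tangentSpace_iff (hS : IsSelfAdjoint S) {X : Matrix ι ι ℝ} :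
    X ∈ tangentSpace S ↔ X.IsSymm ∧ kerProj S * X * kerProj S = 0 := by
  rw [kerProj_mul_mul_kerProj_eq_zero_iff hS]
  rfl

end KernelProjection

end Matrix

theorem stmt10_general (n : ℕ)
    (S : Matrix (Fin n) (Fin n) ℝ) (hS : S.IsSymm)
    (L : Submodule ℝ (Matrix (Fin n) (Fin n) ℝ)) (hLsymm : ∀ A ∈ L, A.IsSymm)
    (piL : Matrix (Fin n) (Fin n) ℝ → Matrix (Fin n) (Fin n) ℝ)
    (hlin : IsLinearMap ℝ piL)
    (hproj : ∀ X : Matrix (Fin n) (Fin n) ℝ,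
      piL X ∈ L ∧ ∀ B ∈ L, ((X - piL X) * B).trace = 0) :
    (∃ Ω ∈ L, Ω ≠ 0 ∧ Ω * S = 0) ↔
      ∃ Y ∈ L, Y ∉ piL '' {X : Matrix (Fin n) (Fin n) ℝ | X.IsSymm ∧
        ∀ v : Fin n → ℝ, S.mulVec v = 0 → ∃ w : Fin n → ℝ, S.mulVec w = X.mulVec v} := by
  have hS' : IsSelfAdjoint S := (isHermitian_iff_isSymm.mpr hS).isSelfAdjoint
  have htrace : ∀ X, ∀ Ω ∈ L, (piL X * Ω).trace = (X * Ω).trace := fun X Ω hΩ => by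
    have h := (hproj X).2 Ω hΩ
    rwa [Matrix.sub_mul, trace_sub, sub_eq_zero, eq_comm] at h
  constructor
  · rintro ⟨Ω, hΩL, hΩ0, hΩS⟩
    refine ⟨Ω, hΩL, ?_⟩
    rintro ⟨X, hX, rfl⟩
    have hQX := ((mem_tangentSpace_iff hS').mp hX).2
    have hQΩ := (mul_eq_zero_iff_kerProj_mul_mul_kerProj_eq hS' (hLsymm _ hΩL)).mp hΩS
    refine hΩ0 ((hLsymm _ hΩL).eq_zero_of_trace_mul_self_eq_zero ?_)
    rw [htrace X _ hΩL, trace_mul_eq_zero_of_mul_mul_eq_zero hQX hQΩ]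
  · rintro ⟨Y, hYL, hY⟩
    let π : Matrix (Fin n) (Fin n) ℝ →ₗ[ℝ] Matrix (Fin n) (Fin n) ℝ := hlin.mk' piL
    have hlt : (tangentSpace S).map π < L :=
      lt_of_le_of_ne (by rintro _ ⟨X, -, rfl⟩; exact (hproj X).1) fun h => by
        rw [← h] at hYL; exact hY hYL
    let B : LinearMap.BilinForm ℝ (Matrix (Fin n) (Fin n) ℝ) :=
      (LinearMap.mul ℝ _).compr₂ (traceLinearMap (Fin n) ℝ ℝ)
    obtain ⟨Ω, hΩL, hΩ0, hΩ⟩ := B.exists_ne_zero_mem_forall_apply_eq_zero hlt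
    have hΩsymm := hLsymm Ω hΩL
    refine ⟨Ω, hΩL, hΩ0, (mul_eq_zero_iff_kerProj_mul_mul_kerProj_eq hS' hΩsymm).mpr ?_⟩
    refine mul_mul_eq_self_of_forall_trace_mul_eq_zero (kerProj_isSymm S) (kerProj_mul_self S)
      hΩsymm fun X hX hQX => ?_
    rw [← htrace X Ω hΩL]
    exact hΩ _ ⟨X, (mem_tangentSpace_iff hS').mpr ⟨hX, hQX⟩, rfl⟩

theorem stmt10 (n d : ℕ) (hd1 : 1 ≤ d) (hdn : d ≤ n)
    (S : Matrix (Fin n) (Fin n) ℝ) (hS : S.IsSymm) (hrank : S.rank = d)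
    (L : Submodule ℝ (Matrix (Fin n) (Fin n) ℝ)) (hLsymm : ∀ A ∈ L, A.IsSymm)
    (piL : Matrix (Fin n) (Fin n) ℝ → Matrix (Fin n) (Fin n) ℝ)
    (hlin : IsLinearMap ℝ piL)
    (hproj : ∀ X : Matrix (Fin n) (Fin n) ℝ,
      piL X ∈ L ∧ ∀ B ∈ L, ((X - piL X) * B).trace = 0) :
    (∃ Ω ∈ L, Ω ≠ 0 ∧ Ω * S = 0) ↔
      ∃ Y ∈ L, Y ∉ piL '' {X : Matrix (Fin n) (Fin n) ℝ | X.IsSymm ∧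
        ∀ v : Fin n → ℝ, S.mulVec v = 0 → ∃ w : Fin n → ℝ, S.mulVec w = X.mulVec v} :=
  stmt10_general n S hS L hLsymm piL hlin hproj
end

section
/- Let 1 ≤ d ≤ n and let L ⊆ Sⁿ be a linear subspace. Suppose there exists S₀ ∈ V(n,d) such that no nonzero Ω ∈ L satisfies ΩS₀ = 0. Then the set F_L = {S ∈ V(n,d) : there exists a nonzero Ω ∈ L with ΩS = 0} is a Zariski-closed proper subset of V(n,d); that is, there is a real polynomial q on Sⁿ, not identically zero on V(n,d), such that F_L ⊆ {S ∈ V(n,d) : q(S) = 0}. -/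
/-
Fix a basis Ω₁, …, Ωₘ of `L`. For each `S`, the linear map `c ↦ (∑ cᵢ Ωᵢ) S` has a matrix `B(S)`
whose entries are linear in the entries of `S`, and `S` has a nonzero annihilator in `L` exactly
when `B(S)` is not injective, i.e. when the Gram determinant `q(S) = det (B(S)ᵀ B(S))` vanishes.
The matrix `S₀` shows that `q` does not vanish identically on `V(n,d)`.
-/

open Matrix MvPolynomial

section

variable {R : Type*} [Field R] [LinearOrder R] [IsStrictOrderedRing R]
  {ι κ : Type*} [Fintype ι] [Fintype κ] [DecidableEq ι]

theorem Matrix.det_transpose_mul_self_ne_zero_iff (B : Matrix κ ι R) :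
    (Bᵀ * B).det ≠ 0 ↔ ∀ c, B *ᵥ c = 0 → c = 0 := by
  rw [← ker_mulVecLin_eq_bot_iff, ← ker_mulVecLin_transpose_mul_self, ker_mulVecLin_eq_bot_iff,
    Ne, ← exists_mulVec_eq_zero_iff]
  simp only [not_exists, not_and, Ne, not_imp_not]

theorem MvPolynomial.eval_det_transpose_mul_self_ne_zero_iff {σ : Type*}
    (P : Matrix κ ι (MvPolynomial σ R)) (x : σ → R) :
    eval x (Pᵀ * P).det ≠ 0 ↔ ∀ c, P.map (eval x) *ᵥ c = 0 → c = 0 := by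
  rw [RingHom.map_det, RingHom.mapMatrix_apply, Matrix.map_mul, transpose_map,
    det_transpose_mul_self_ne_zero_iff]

end

section

variable {R : Type*} [CommRing R] {ι α β γ : Type*} [Fintype ι] [Fintype β]

noncomputable def mulRightPolyMatrix (M : ι → Matrix α β R) :
    Matrix (α × γ) ι (MvPolynomial (β × γ) R) :=
  fun p i => ∑ b, C (M i p.1 b) * X (b, p.2)

theorem mulVec_map_eval_mulRightPolyMatrix (M : ι → Matrix α β R) (S : Matrix β γ R)
    (c : ι → R) :
    (mulRightPolyMatrix M).map (eval fun q => S q.1 q.2) *ᵥ c =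
      fun p => ((∑ i, c i • M i) * S) p.1 p.2 := by
  ext p
  simp only [mulVec, dotProduct, map_apply, mulRightPolyMatrix, map_sum, map_mul, eval_C, eval_X,
    Matrix.sum_apply, Matrix.smul_apply, mul_apply, smul_eq_mul, Finset.sum_mul]
  rw [Finset.sum_comm]
  simp only [mul_comm, mul_left_comm]

end

theorem Submodule.exists_mvPolynomial_eval_ne_zero_iff_forall_mul_eq_zero
    {R : Type*} [Field R] [LinearOrder R] [IsStrictOrderedRing R]
    {α β γ : Type*} [Fintype α] [Fintype β] [Fintype γ] (L : Submodule R (Matrix α β R)) :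
    ∃ q : MvPolynomial (β × γ) R, ∀ S : Matrix β γ R,
      eval (fun p => S p.1 p.2) q ≠ 0 ↔ ∀ Ω ∈ L, Ω * S = 0 → Ω = 0 := by
  let b := Module.finBasis R L
  let P := mulRightPolyMatrix (γ := γ) fun i => (b i : Matrix α β R)
  refine ⟨(Pᵀ * P).det, fun S => ?_⟩
  rw [eval_det_transpose_mul_self_ne_zero_iff]
  simp only [P, mulVec_map_eval_mulRightPolyMatrix]
  have hvec : ∀ A : Matrix α γ R, (fun p : α × γ => A p.1 p.2) = 0 ↔ A = 0 := fun A =>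
    ⟨fun h => Matrix.ext fun i j => congrFun h (i, j), fun h => by subst h; rfl⟩
  have hcomb : ∀ c, ∑ i, c i • (b i : Matrix α β R) = b.equivFun.symm c := fun c => by
    simp [Module.Basis.equivFun_symm_apply]
  simp only [hvec, hcomb, ← b.equivFun.symm.map_eq_zero_iff]
  refine (b.equivFun.toEquiv.forall_congr_left
    (p := fun Ω : L => (Ω : Matrix α β R) * S = 0 → Ω = 0)).symm.trans ?_
  simp only [Subtype.forall, Submodule.mk_eq_zero]

theorem stmt11_general (n d : ℕ)
    (L : Submodule ℝ (Matrix (Fin n) (Fin n) ℝ))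
    (hexists : ∃ S₀ : Matrix (Fin n) (Fin n) ℝ, S₀.IsSymm ∧ S₀.rank = d ∧
      ∀ Ω ∈ L, Ω * S₀ = 0 → Ω = 0) :
    ∃ q : MvPolynomial (Fin n × Fin n) ℝ,
      (∃ S : Matrix (Fin n) (Fin n) ℝ, S.IsSymm ∧ S.rank = d ∧
        MvPolynomial.eval (fun p => S p.1 p.2) q ≠ 0) ∧
      ∀ S : Matrix (Fin n) (Fin n) ℝ, S.IsSymm → S.rank = d →
        (∃ Ω ∈ L, Ω ≠ 0 ∧ Ω * S = 0) →
        MvPolynomial.eval (fun p => S p.1 p.2) q = 0 := by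
  obtain ⟨q, hq⟩ := L.exists_mvPolynomial_eval_ne_zero_iff_forall_mul_eq_zero (γ := Fin n)
  obtain ⟨S₀, hS₀symm, hS₀rank, hS₀⟩ := hexists
  refine ⟨q, ⟨S₀, hS₀symm, hS₀rank, (hq S₀).2 hS₀⟩, ?_⟩
  rintro S - - ⟨Ω, hΩL, hΩne, hΩS⟩
  by_contra hqS
  exact hΩne ((hq S).1 hqS Ω hΩL hΩS)

theorem stmt11 (n d : ℕ) (hd1 : 1 ≤ d) (hdn : d ≤ n)
    (L : Submodule ℝ (Matrix (Fin n) (Fin n) ℝ)) (hLsymm : ∀ A ∈ L, A.IsSymm)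
    (hexists : ∃ S₀ : Matrix (Fin n) (Fin n) ℝ, S₀.IsSymm ∧ S₀.rank = d ∧
      ∀ Ω ∈ L, Ω * S₀ = 0 → Ω = 0) :
    ∃ q : MvPolynomial (Fin n × Fin n) ℝ,
      (∃ S : Matrix (Fin n) (Fin n) ℝ, S.IsSymm ∧ S.rank = d ∧
        MvPolynomial.eval (fun p => S p.1 p.2) q ≠ 0) ∧
      ∀ S : Matrix (Fin n) (Fin n) ℝ, S.IsSymm → S.rank = d →
        (∃ Ω ∈ L, Ω ≠ 0 ∧ Ω * S = 0) →
        MvPolynomial.eval (fun p => S p.1 p.2) q = 0 :=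
  stmt11_general n d L hexists
end

section
/- Let n, d, m be integers with 1 ≤ d ≤ n and m ≤ nd − d(d−1)/2. Then there exists a real polynomial P in the entries of an m-tuple of n×n symmetric matrices, not identically zero, such that whenever Ω₁,…,Ω_m ∈ Sⁿ are linearly independent and P(Ω₁,…,Ω_m) ≠ 0, their span L has the following property: there is a real polynomial q on Sⁿ, not identically zero on V(n,d), such that for every S ∈ V(n,d) with q(S) ≠ 0 one has ΩS ≠ 0 for every nonzero Ω ∈ L. -/
open Matrix

open MvPolynomial in
/-- Gram polynomial of the products `Ωs i * S`, as a polynomial in the entries of `S`. -/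
noncomputable def stmt12Q {n m : ℕ} (Ωs : Fin m → Matrix (Fin n) (Fin n) ℝ) :
    MvPolynomial (Fin n × Fin n) ℝ :=
  Matrix.det (Matrix.of fun i j : Fin m =>
    ∑ a : Fin n, ∑ b : Fin n,
      (∑ c : Fin n, C (Ωs i a c) * X (c, b)) * (∑ c : Fin n, C (Ωs j a c) * X (c, b)))

lemma stmt12Q_eval {n m : ℕ} (Ωs : Fin m → Matrix (Fin n) (Fin n) ℝ)
    (S : Matrix (Fin n) (Fin n) ℝ) :
    MvPolynomial.eval (fun p => S p.1 p.2) (stmt12Q Ωs)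
      = Matrix.det (Matrix.of fun i j : Fin m =>
          ∑ a : Fin n, ∑ b : Fin n, (Ωs i * S) a b * (Ωs j * S) a b) := by
  rw [stmt12Q, RingHom.map_det]
  congr 1
  ext i j
  simp [Matrix.map_apply, Matrix.mul_apply, map_sum]

open MvPolynomial in
/-- The polynomial `P` in the entries of the tuple `Ωs`. -/
noncomputable def stmt12P (n d m : ℕ) : MvPolynomial (Fin m × Fin n × Fin n) ℝ :=
  Matrix.det (Matrix.of fun i j : Fin m =>
    ∑ a : Fin n, ∑ b : Fin n,
      if (b : ℕ) < d then X (i, a, b) * X (j, a, b) else 0)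

lemma stmt12P_eval {n d m : ℕ} (Ωs : Fin m → Matrix (Fin n) (Fin n) ℝ) :
    MvPolynomial.eval (fun x => Ωs x.1 x.2.1 x.2.2) (stmt12P n d m)
      = Matrix.det (Matrix.of fun i j : Fin m =>
          ∑ a : Fin n, ∑ b : Fin n,
            if (b : ℕ) < d then Ωs i a b * Ωs j a b else 0) := by
  rw [stmt12P, RingHom.map_det]
  congr 1
  ext i j
  simp [Matrix.map_apply, map_sum, apply_ite]

/-- If the Gram determinant of a family of matrices is nonzero, any vanishing linear
combination is trivial. -/
lemma stmt12_gram {n m : ℕ} (r : Fin m → Matrix (Fin n) (Fin n) ℝ)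
    (hdet : (Matrix.of fun i j : Fin m =>
        ∑ a : Fin n, ∑ b : Fin n, r i a b * r j a b).det ≠ 0)
    (c : Fin m → ℝ) (hc : ∑ j, c j • r j = 0) : c = 0 := by
  apply Matrix.eq_zero_of_mulVec_eq_zero hdet
  funext i
  have h0 : ∀ a b : Fin n, (∑ j, c j * r j a b) = 0 := by
    intro a b
    have := congrFun (congrFun hc a) b
    simpa [Matrix.sum_apply] using this
  simp only [Matrix.mulVec, dotProduct, Matrix.of_apply, Pi.zero_apply]
  have key : ∑ j, (∑ a : Fin n, ∑ b : Fin n, r i a b * r j a b) * c j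
      = ∑ a : Fin n, ∑ b : Fin n, r i a b * ∑ j, c j * r j a b := by
    simp_rw [Finset.sum_mul, Finset.mul_sum]
    rw [Finset.sum_comm]
    refine Finset.sum_congr rfl fun a _ => ?_
    rw [Finset.sum_comm]
    exact Finset.sum_congr rfl fun b _ => Finset.sum_congr rfl fun j _ => by ring
  rw [key]
  simp [h0]

/-- Counting the pairs `(a, b)` with `b ≤ a` and `b < d`. -/
lemma stmt12_card (n d m : ℕ) (hd1 : 1 ≤ d) (hdn : d ≤ n)
    (hm : (m : ℤ) ≤ (n : ℤ) * d - d * (d - 1) / 2) :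
    m ≤ Fintype.card {p : Fin n × Fin n // ((p.2 : ℕ) < d ∧ p.2 ≤ p.1)} := by
  classical
  have hcard : Fintype.card {p : Fin n × Fin n // ((p.2 : ℕ) < d ∧ p.2 ≤ p.1)}
      = ∑ b : Fin n, if (b : ℕ) < d then (n - (b : ℕ)) else 0 := by
    rw [Fintype.card_subtype, Finset.card_filter, Fintype.sum_prod_type, Finset.sum_comm]
    refine Finset.sum_congr rfl fun b _ => ?_
    by_cases hb : (b : ℕ) < d
    · simp only [hb, true_and, if_true]
      rw [← Finset.card_filter]
      have h1 : (Finset.univ.filter fun a : Fin n => b ≤ a) = Finset.Ici b := by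
        ext a; simp
      rw [h1, Fin.card_Ici]
    · simp [hb]
  rw [hcard]
  have hsum : (∑ b : Fin n, if (b : ℕ) < d then (n - (b : ℕ)) else 0)
      = ∑ k ∈ Finset.range d, (n - k) := by
    rw [Fin.sum_univ_eq_sum_range (fun k => if k < d then n - k else 0) n,
      ← Finset.sum_filter]
    congr 1
    ext k
    simp only [Finset.mem_filter, Finset.mem_range]
    omega
  rw [hsum]
  have hcast : ((∑ k ∈ Finset.range d, (n - k) : ℕ) : ℤ)
      = (n : ℤ) * d - ∑ k ∈ Finset.range d, (k : ℤ) := by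
    rw [Nat.cast_sum]
    have : ∀ k ∈ Finset.range d, ((n - k : ℕ) : ℤ) = (n : ℤ) - k := by
      intro k hk
      have : k ≤ n := le_of_lt (lt_of_lt_of_le (Finset.mem_range.mp hk) hdn)
      omega
    rw [Finset.sum_congr rfl this, Finset.sum_sub_distrib]
    simp [mul_comm]
  have hgauss : 2 * (∑ k ∈ Finset.range d, (k : ℤ)) = (d : ℤ) * ((d : ℤ) - 1) := by
    have h := Finset.sum_range_id_mul_two d
    have h2 : ((∑ k ∈ Finset.range d, k : ℕ) : ℤ) * 2 = ((d * (d - 1) : ℕ) : ℤ) := by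
      exact_mod_cast congrArg (Nat.cast : ℕ → ℤ) h
    rw [Nat.cast_mul, Nat.cast_sub hd1] at h2
    push_cast at h2 ⊢
    try linarith [h2]
  rw [← Nat.cast_le (α := ℤ), hcast]
  have hdiv : ((d : ℤ) * ((d : ℤ) - 1)) / 2 = ∑ k ∈ Finset.range d, (k : ℤ) := by
    rw [← hgauss, Int.mul_ediv_cancel_left _ two_ne_zero]
  have hm' : (m : ℤ) ≤ (n : ℤ) * d - (d : ℤ) * ((d : ℤ) - 1) / 2 := hm
  rw [hdiv] at hm'
  exact hm'

theorem stmt12 (n d m : ℕ) (hd1 : 1 ≤ d) (hdn : d ≤ n)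
    (hm : (m : ℤ) ≤ (n : ℤ) * d - d * (d - 1) / 2) :
    ∃ P : MvPolynomial (Fin m × Fin n × Fin n) ℝ,
      (∃ Ωs : Fin m → Matrix (Fin n) (Fin n) ℝ, (∀ i, (Ωs i).IsSymm) ∧
        MvPolynomial.eval (fun x => Ωs x.1 x.2.1 x.2.2) P ≠ 0) ∧
      ∀ Ωs : Fin m → Matrix (Fin n) (Fin n) ℝ, (∀ i, (Ωs i).IsSymm) →
        LinearIndependent ℝ Ωs →
        MvPolynomial.eval (fun x => Ωs x.1 x.2.1 x.2.2) P ≠ 0 →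
        ∃ q : MvPolynomial (Fin n × Fin n) ℝ,
          (∃ S : Matrix (Fin n) (Fin n) ℝ, S.IsSymm ∧ S.rank = d ∧
            MvPolynomial.eval (fun p => S p.1 p.2) q ≠ 0) ∧
          ∀ S : Matrix (Fin n) (Fin n) ℝ, S.IsSymm → S.rank = d →
            MvPolynomial.eval (fun p => S p.1 p.2) q ≠ 0 →
            ∀ Ω ∈ Submodule.span ℝ (Set.range Ωs), Ω ≠ 0 → Ω * S ≠ 0 := by
  classical
  -- the rank-d model matrix
  set w : Fin n → ℝ := fun b => if (b : ℕ) < d then 1 else 0 with hw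
  set S₀ : Matrix (Fin n) (Fin n) ℝ := Matrix.diagonal w with hS₀
  have hS₀symm : S₀.IsSymm := Matrix.isSymm_diagonal w
  have hS₀rank : S₀.rank = d := by
    rw [hS₀, Matrix.rank_diagonal]
    have e : {i : Fin n // w i ≠ 0} ≃ Fin d :=
      { toFun := fun i => ⟨((i : Fin n) : ℕ), by
          by_contra h
          exact i.2 (by simp [hw, h])⟩
        invFun := fun k => ⟨⟨(k : ℕ), lt_of_lt_of_le k.2 hdn⟩, by
          simp [hw, k.2]⟩
        left_inv := fun i => rfl
        right_inv := fun k => rfl }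
    rw [Fintype.card_congr e, Fintype.card_fin]
  refine ⟨stmt12P n d m, ?_, ?_⟩
  · -- a witness tuple on which P does not vanish
    obtain ⟨e⟩ := Function.Embedding.nonempty_of_card_le
      (le_trans (le_of_eq (Fintype.card_fin m)) (stmt12_card n d m hd1 hdn hm))
    set Ωs : Fin m → Matrix (Fin n) (Fin n) ℝ :=
      fun i => Matrix.of fun a b =>
        if (a, b) = (e i).1 ∨ (b, a) = (e i).1 then (1 : ℝ) else 0 with hΩs
    have hval : ∀ i, Ωs i (e i).1.1 (e i).1.2 = 1 := by
      intro i
      simp [hΩs]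
    refine ⟨Ωs, ?_, ?_⟩
    · intro i
      apply Matrix.IsSymm.ext
      intro a b
      simp only [hΩs, Matrix.of_apply]
      exact if_congr or_comm rfl rfl
    · rw [stmt12P_eval]
      have hdiagpos : ∀ i : Fin m,
          0 < ∑ a : Fin n, ∑ b : Fin n,
            (if (b : ℕ) < d then Ωs i a b * Ωs i a b else 0) := by
        intro i
        apply Finset.sum_pos'
        · intro a _
          apply Finset.sum_nonneg
          intro b _
          split
          · exact mul_self_nonneg _
          · exact le_refl 0
        · refine ⟨(e i).1.1, Finset.mem_univ _, Finset.sum_pos' ?_ ?_⟩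
          · intro b _
            split
            · exact mul_self_nonneg _
            · exact le_refl 0
          · refine ⟨(e i).1.2, Finset.mem_univ _, ?_⟩
            rw [if_pos (e i).2.1, hval i]
            norm_num
      have hoff : ∀ i j : Fin m, i ≠ j →
          (∑ a : Fin n, ∑ b : Fin n,
            (if (b : ℕ) < d then Ωs i a b * Ωs j a b else 0)) = 0 := by
        intro i j hij
        have hne : (e i).1 ≠ (e j).1 := fun h => hij (e.injective (Subtype.ext h))
        refine Finset.sum_eq_zero fun a _ => Finset.sum_eq_zero fun b _ => ?_
        have hzero : Ωs i a b * Ωs j a b = 0 := by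
          simp only [hΩs, Matrix.of_apply]
          by_cases h1 : (a, b) = (e i).1 ∨ (b, a) = (e i).1
          · by_cases h2 : (a, b) = (e j).1 ∨ (b, a) = (e j).1
            · exfalso
              have hei : (e i).1.2 ≤ (e i).1.1 := (e i).2.2
              have hej : (e j).1.2 ≤ (e j).1.1 := (e j).2.2
              rcases h1 with h1 | h1 <;> rcases h2 with h2 | h2
              · exact hne (h1.symm.trans h2)
              · rw [← h1] at hei
                rw [← h2] at hej
                have hab : a = b := le_antisymm hej hei
                subst hab
                exact hne (h1.symm.trans h2)
              · rw [← h1] at hei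
                rw [← h2] at hej
                have hab : a = b := le_antisymm hei hej
                subst hab
                exact hne (h1.symm.trans h2)
              · exact hne (h1.symm.trans h2)
            · rw [if_neg h2, mul_zero]
          · rw [if_neg h1, zero_mul]
        rw [hzero, ite_self]
      have hdiag : (Matrix.of fun i j : Fin m =>
          ∑ a : Fin n, ∑ b : Fin n,
            (if (b : ℕ) < d then Ωs i a b * Ωs j a b else 0))
          = Matrix.diagonal (fun i => ∑ a : Fin n, ∑ b : Fin n,
              (if (b : ℕ) < d then Ωs i a b * Ωs i a b else 0)) := by
        ext i j
        by_cases h : i = j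
        · subst h
          simp [Matrix.diagonal_apply_eq]
        · rw [Matrix.of_apply, Matrix.diagonal_apply_ne _ h]
          exact hoff i j h
      rw [hdiag, Matrix.det_diagonal]
      exact ne_of_gt (Finset.prod_pos fun i _ => hdiagpos i)
  · -- the main implication
    intro Ωs hsymm hli hP
    refine ⟨stmt12Q Ωs, ⟨S₀, hS₀symm, hS₀rank, ?_⟩, ?_⟩
    · rw [stmt12Q_eval]
      rw [stmt12P_eval] at hP
      have hmat : (Matrix.of fun i j : Fin m =>
            ∑ a : Fin n, ∑ b : Fin n, (Ωs i * S₀) a b * (Ωs j * S₀) a b)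
          = (Matrix.of fun i j : Fin m =>
            ∑ a : Fin n, ∑ b : Fin n,
              if (b : ℕ) < d then Ωs i a b * Ωs j a b else 0) := by
        ext i j
        simp only [Matrix.of_apply]
        refine Finset.sum_congr rfl fun a _ => Finset.sum_congr rfl fun b _ => ?_
        rw [hS₀, Matrix.mul_diagonal, Matrix.mul_diagonal, hw]
        by_cases hb : (b : ℕ) < d <;> simp [hb]
      rw [hmat]
      exact hP
    · intro S _ _ hq Ω hΩmem hΩne hΩS
      rw [stmt12Q_eval] at hq
      obtain ⟨c, hc⟩ := (Submodule.mem_span_range_iff_exists_fun ℝ).mp hΩmem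
      have hsum : ∑ j, c j • (Ωs j * S) = 0 := by
        have h1 : (∑ j, c j • Ωs j) * S = 0 := by rw [hc, hΩS]
        rw [Finset.sum_mul] at h1
        simpa [smul_mul_assoc] using h1
      have hc0 : c = 0 := stmt12_gram (fun i => Ωs i * S) hq c hsum
      rw [hc0] at hc
      simp at hc
      exact hΩne hc.symm
end
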